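/- Suppose N = 0, i.e. every F_i has order 0. Then the implicit ideal ID of P(X,U) has dimension n − 1 if and only if the leading matrix S has rank n − 1. -/

import Mathlib

open MvPolynomial

namespace DPPE

/-- Differential variables: `(Sum.inl i, k)` is the `k`-th derivative of `xᵢ`;
`(Sum.inr j, k)` is the `k`-th derivative of `uⱼ`. -/
abbrev Vr (n : ℕ) := (Fin n ⊕ Fin (n - 1)) × ℕ

/-- The differential polynomial ring `K{X ∪ U}`. -/
abbrev R (K : Type) [Field K] (n : ℕ) := MvPolynomial (Vr n) K

variable {K : Type} [Field K] {n : ℕ}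

/-- The order of `f` in the differential indeterminate `v` (equal to `-1` if absent). -/
noncomputable def ordIn {A : Type} [CommSemiring A] (f : MvPolynomial (Vr n) A)
    (v : Fin n ⊕ Fin (n - 1)) : ℤ :=
  ((f.vars.filter (fun w => w.1 = v)).image (fun w => (w.2 : ℤ))).max.unbotD (-1)

/-- The (total) order of the differential polynomial `f`. -/
noncomputable def ordTot {A : Type} [CommSemiring A] (f : MvPolynomial (Vr n) A) : ℕ :=
  (f.vars.image Prod.snd).max.unbotD 0

/-- `f` belongs to `K{X}`. -/
def xOnly {A : Type} [CommSemiring A] (f : MvPolynomial (Vr n) A) : Prop :=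
  ∀ w ∈ f.vars, (w.1).isLeft

/-- `f` belongs to `K{U}`. -/
def uOnly {A : Type} [CommSemiring A] (f : MvPolynomial (Vr n) A) : Prop :=
  ∀ w ∈ f.vars, (w.1).isRight

/-- `f` is a linear (degree at most 1) differential polynomial. -/
def IsLinearPoly {A : Type} [CommSemiring A] (f : MvPolynomial (Vr n) A) : Prop :=
  f.totalDegree ≤ 1

/-- The coefficient of the `k`-th derivative of the indeterminate `v` in `f`. -/
noncomputable def cf {A : Type} [CommSemiring A] (f : MvPolynomial (Vr n) A)
    (v : Fin n ⊕ Fin (n - 1)) (k : ℕ) : A :=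
  MvPolynomial.coeff (Finsupp.single (v, k) 1) f

/-- An order embedding realizing the ranking `R*` on `X ∪ U` that eliminates `U` with
respect to `X`, orderly on each block, with `x_n < ⋯ < x_1` and `u_1 < ⋯ < u_{n-1}`. -/
def rkk (w : Vr n) : Lex (Bool × Lex (ℕ × ℕ)) :=
  toLex (Sum.elim (fun i => (false, toLex (w.2, (i.rev : ℕ))))
    (fun j => (true, toLex (w.2, (j : ℕ)))) w.1)

/-- `v` is the lead (highest ranked derivative w.r.t. `R*`) of `g`. -/
def IsLead {A : Type} [CommSemiring A] (g : MvPolynomial (Vr n) A) (v : Vr n) : Prop :=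
  v ∈ g.vars ∧ ∀ w ∈ g.vars, rkk w ≤ rkk v

/-- A system `𝒫(X,U)` of `n` linear differential polynomial parametric equations
`xᵢ = Pᵢ(U) = aᵢ - Hᵢ(U)` in `n-1` differential parameters, over an ordinary
differential field `(K, der)`;  `D` is the induced derivation on `K{X ∪ U}`.
`Fᵢ = xᵢ - aᵢ + Hᵢ(U)`. -/
structure Sys (K : Type) [Field K] (n : ℕ) where
  hn : 2 ≤ n
  der : Derivation ℤ K K
  D : Derivation ℤ (R K n) (R K n)
  hD_C : ∀ c : K, D (C c) = C (der c)
  hD_X : ∀ (v : Fin n ⊕ Fin (n - 1)) (k : ℕ), D (X (v, k)) = X (v, k + 1)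
  a : Fin n → K
  H : Fin n → R K n
  H_hom : ∀ i, (H i).IsHomogeneous 1
  H_u : ∀ i, uOnly (H i)
  H_ne : ∃ i, H i ≠ 0
  param : ∀ j : Fin (n - 1), ∃ i, 0 ≤ ordIn (H i) (Sum.inr j)

namespace Sys

/-- `Fᵢ = xᵢ - aᵢ + Hᵢ(U)`. -/
noncomputable def F (S : Sys K n) (i : Fin n) : R K n :=
  X (Sum.inl i, 0) - C (S.a i) + S.H i

/-- `oᵢ = ord(Fᵢ)`. -/
noncomputable def o (S : Sys K n) (i : Fin n) : ℕ := ordTot (S.F i)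

/-- `γⱼ = min_i (oᵢ - ord(Fᵢ, uⱼ))`. -/
noncomputable def gamZ (S : Sys K n) (j : Fin (n - 1)) : ℤ :=
  (Finset.univ : Finset (Fin n)).inf' ⟨⟨0, by have h := S.hn; omega⟩, Finset.mem_univ _⟩
    fun i => (S.o i : ℤ) - ordIn (S.F i) (Sum.inr j)

noncomputable def gam (S : Sys K n) (j : Fin (n - 1)) : ℕ := (S.gamZ j).toNat

/-- `N = ∑ oᵢ`. -/
noncomputable def Nn (S : Sys K n) : ℕ := ∑ i, S.o i

/-- The completeness index `γ = ∑ γⱼ`. -/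
noncomputable def gamT (S : Sys K n) : ℕ := ∑ j, S.gam j

/-- `L = ∑ (N - oᵢ - γ + 1)`. -/
noncomputable def L (S : Sys K n) : ℕ := ∑ i, (S.Nn - S.o i - S.gamT + 1)

/-- `Lʰ = ∑ (N - oᵢ - γ)`. -/
noncomputable def Lh (S : Sys K n) : ℕ := ∑ i, (S.Nn - S.o i - S.gamT)

/-- The set `PS = {∂^k Fᵢ ∣ 0 ≤ k ≤ N - oᵢ - γ}`. -/
def PSset (S : Sys K n) : Set (R K n) :=
  {g | ∃ i k, k ≤ S.Nn - S.o i - S.gamT ∧ g = (⇑S.D)^[k] (S.F i)}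

/-- `f` belongs to the polynomial subring `K[𝒳][𝒱]`. -/
def inXV (S : Sys K n) {A : Type} [CommSemiring A] (f : MvPolynomial (Vr n) A) : Prop :=
  ∀ w ∈ f.vars,
    Sum.elim (fun i => w.2 ≤ S.Nn - S.o i - S.gamT)
      (fun j => w.2 ≤ S.Nn - S.gam j - S.gamT) w.1

/-- Membership in the ideal `(PS)` generated by `PS` in `K[𝒳][𝒱]`. -/
def PSIdealMem (S : Sys K n) (f : R K n) : Prop :=
  f ∈ Ideal.span S.PSset ∧ S.inXV f

/-- Substitution `x_{ik} ↦ ∂^k(Pᵢ(U))` defining the implicit ideal. -/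
noncomputable def subst (S : Sys K n) : R K n →ₐ[K] R K n :=
  aeval fun w =>
    Sum.elim (fun i => (⇑S.D)^[w.2] (C (S.a i) - S.H i)) (fun j => X (Sum.inr j, w.2)) w.1

/-- Membership in the implicit ideal `ID = {f ∈ K{X} ∣ f(P₁(U),…,Pₙ(U)) = 0}`. -/
def memID (S : Sys K n) (f : R K n) : Prop := xOnly f ∧ S.subst f = 0

/-- Membership in the differential ideal `[A]` of `K{X}` generated by `A ∈ K{X}`. -/
def memDiffSpanX (S : Sys K n) (A f : R K n) : Prop :=
  xOnly f ∧ f ∈ Ideal.span {g | ∃ k, g = (⇑S.D)^[k] A}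

/-- `dim ID = n - 1`: the implicit ideal has a characteristic set `{A}` with `A`
a nonzero linear differential polynomial, i.e. `ID = [A]`. -/
def DimFull (S : Sys K n) : Prop :=
  ∃ A : R K n, A ≠ 0 ∧ IsLinearPoly A ∧ xOnly A ∧ ∀ f, (S.memID f ↔ S.memDiffSpanX A f)

/-- The action of a linear differential operator `Lop = ∑ cₖ ∂^k ∈ K[∂]` on `f`. -/
noncomputable def applyOp (S : Sys K n) (Lop : Polynomial K) (f : R K n) : R K n :=
  ∑ k ∈ Lop.support, C (Lop.coeff k) * (⇑S.D)^[k] f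

/-- `Lop` is a left divisor of `Fop` in `K[∂]`. -/
def leftDvd (S : Sys K n) (Lop Fop : Polynomial K) : Prop :=
  ∃ Mop : Polynomial K, ∀ f : R K n, S.applyOp Fop f = S.applyOp Lop (S.applyOp Mop f)

/-- For `B ∈ ID` linear, written `B = ∑ 𝓕ᵢ(xᵢ - aᵢ)`: the operator `𝓕ᵢ ∈ K[∂]`. -/
noncomputable def opOf (S : Sys K n) (B : R K n) (i : Fin n) : Polynomial K :=
  ∑ k ∈ Finset.range (ordTot B + 1), Polynomial.monomial k (cf B (Sum.inl i) k)

/-- `B` is `ID`-primitive: the greatest common left divisor of `𝓕₁,…,𝓕ₙ` lies in `K`. -/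
def IDPrimitive (S : Sys K n) (B : R K n) : Prop :=
  ∀ Lop : Polynomial K, (∀ i, S.leftDvd Lop (S.opOf B i)) → Lop.natDegree = 0

/-- `B'` is an `ID`-primitive part of `B`:  `𝓕ᵢ = IDcont(B)·𝓛ᵢ` with `𝓛₁,…,𝓛ₙ`
coprime and `B' = ∑ 𝓛ᵢ(xᵢ - aᵢ)`. -/
def IsIDPrimPart (S : Sys K n) (B B' : R K n) : Prop :=
  ∃ (Lop : Polynomial K) (Lfam : Fin n → Polynomial K),
    (∀ i f, S.applyOp (S.opOf B i) f = S.applyOp Lop (S.applyOp (Lfam i) f)) ∧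
    (∀ Q : Polynomial K, (∀ i, S.leftDvd Q (Lfam i)) → Q.natDegree = 0) ∧
    B' = ∑ i, S.applyOp (Lfam i) (X (Sum.inl i, 0) - C (S.a i))

/-- The co-order of `B` in `(PS)`: the greatest `c` with `∂^c B ∈ (PS)`. -/
noncomputable def coOrd (S : Sys K n) (B : R K n) : ℕ :=
  sSup {c : ℕ | S.PSIdealMem ((⇑S.D)^[c] B)}

/-- The leading coefficients vector `l(B) = (α₁,…,αₙ)`, `αᵢ` the coefficient of
`∂^{N - oᵢ - γ - c(B)}` in `𝓕ᵢ`. -/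
noncomputable def lvec (S : Sys K n) (B : R K n) : Fin n → K :=
  fun i => cf B (Sum.inl i) (S.Nn - S.o i - S.gamT - S.coOrd B)

/-- The leading matrix `S` of the system: entry `(i,j)` is the coefficient of
`u_{n-j, oᵢ - γ_{n-j}}` in `Fᵢ`. -/
noncomputable def Smat (S : Sys K n) : Matrix (Fin n) (Fin (n - 1)) K :=
  Matrix.of fun i j =>
    if S.gam j.rev ≤ S.o i then cf (S.F i) (Sum.inr j.rev) (S.o i - S.gam j.rev) else 0

/-- Row indices of the complete differential resultant matrix `M(L)`. -/
abbrev RI (S : Sys K n) := (i : Fin n) × Fin (S.Nn - S.o i - S.gamT + 1)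

/-- Column indices corresponding to the variables `𝒱`. -/
abbrev CI (S : Sys K n) := (j : Fin (n - 1)) × Fin (S.Nn - S.gam j - S.gamT + 1)

/-- The principal matrix `M_{L-1}` of the system. -/
noncomputable def Mprin (S : Sys K n) : Matrix S.RI S.CI K :=
  Matrix.of fun ik jm => cf ((⇑S.D)^[(ik.2 : ℕ)] (S.F ik.1)) (Sum.inr jm.1) (jm.2 : ℕ)

/-- The complete differential resultant matrix `M(L)` (last column holds the parts
`x_{ik} - ∂^k aᵢ`). -/
noncomputable def Mfull (S : Sys K n) : Matrix S.RI (S.CI ⊕ Unit) (R K n) :=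
  Matrix.of fun ik c =>
    Sum.elim
      (fun jm => (C (cf ((⇑S.D)^[(ik.2 : ℕ)] (S.F ik.1)) (Sum.inr jm.1) (jm.2 : ℕ)) : R K n))
      (fun _ => X (Sum.inl ik.1, (ik.2 : ℕ)) - C ((⇑S.der)^[(ik.2 : ℕ)] (S.a ik.1))) c

/-- The linear complete differential resultant `∂CRes(F₁,…,Fₙ) = det M(L)`. -/
noncomputable def dCRes (S : Sys K n) : R K n :=
  if h : Fintype.card (S.CI ⊕ Unit) = Fintype.card S.RI then
    (S.Mfull.submatrix (Fintype.equivOfCardEq h) id).det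
  else 0

/-- `G` is the (reduced) Groebner basis associated to the system `𝒫(X,U)`,
w.r.t. the lex monomial order induced by the ranking `R*`. -/
def IsAssocGB (S : Sys K n) (G : Finset (R K n)) : Prop :=
  (∀ g ∈ G, g ≠ 0 ∧ IsLinearPoly g ∧ S.inXV g ∧ g ∈ Ideal.span S.PSset) ∧
  Ideal.span (G : Set (R K n)) = Ideal.span S.PSset ∧
  (∀ g ∈ G, ∃ v : Vr n, IsLead g v ∧ cf g v.1 v.2 = 1 ∧ ∀ g' ∈ G, g' ≠ g → v ∉ g'.vars) ∧
  (∀ f : R K n, f ∈ Ideal.span S.PSset → S.inXV f → IsLinearPoly f → f ≠ 0 →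
    ∃ g ∈ G, ∃ v : Vr n, IsLead g v ∧ IsLead f v)

end Sys

/-- `G₀ = G ∩ K{X}`. -/
noncomputable def G0 (G : Finset (R K n)) : Finset (R K n) :=
  @Finset.filter _ (fun g => xOnly g) (Classical.decPred _) G

/-!
When `N = 0` every `Fᵢ` is `xᵢ - aᵢ + ∑ⱼ mᵢⱼ uⱼ` for a matrix `M = (mᵢⱼ)` over `K`, and `S` is `M`
with its columns reversed. Every `α` in the left kernel of `M` gives the element `∑ αᵢ (xᵢ - aᵢ)`
of `ID`.

If `rank M = n - 1`, the left kernel is spanned by a single `α`, say with `α_{i₀} ≠ 0`. Modulo the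
differential ideal generated by `∑ αᵢ (xᵢ - aᵢ)` every `x_{i₀,k}` can be eliminated, and the
remaining `∂ᵏPᵢ`, `i ≠ i₀`, are algebraically independent because their top-order parts
`∑ⱼ mᵢⱼ u_{j,k}` are linearly independent. Hence `ID = [∑ αᵢ (xᵢ - aᵢ)]`.

Conversely, if `ID = [A]` with `A` linear, the translation `xᵢ ↦ xᵢ + Pᵢ` sends `A` to a
homogeneous linear `B` and each `∑ αᵢ (xᵢ - aᵢ)` to `∑ αᵢ xᵢ`, which therefore lies in the
`K`-span of the `∂ᵏB`. Comparing coefficients of top order shows that all such `α` are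
proportional, so the left kernel has dimension at most one.
-/

end DPPE

namespace MvPolynomial

section Linear

variable {σ R : Type*} [CommSemiring R] {p : MvPolynomial σ R}

theorem eq_zero_or_eq_single_of_mem_support (hp : p.totalDegree ≤ 1) {d : σ →₀ ℕ}
    (hd : d ∈ p.support) : d = 0 ∨ ∃ v, d = Finsupp.single v 1 := by
  have hdeg : d.degree ≤ 1 := (le_totalDegree hd).trans hp
  interval_cases h : d.degree
  · exact Or.inl ((Finsupp.degree_eq_zero_iff d).mp h)
  · obtain ⟨v, hv⟩ : d ∈ Set.range (fun v : σ ↦ Finsupp.single v 1) := by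
      rw [Finsupp.range_single_one]; exact h
    exact Or.inr ⟨v, hv.symm⟩

theorem mem_vars_of_coeff_single_ne_zero {v : σ} (h : coeff (Finsupp.single v 1) p ≠ 0) :
    v ∈ p.vars :=
  (mem_vars_iff_mem_support v).mpr ⟨_, mem_support_iff.mpr h, by simp⟩

theorem coeff_single_ne_zero_of_mem_vars (hp : p.totalDegree ≤ 1) {v : σ} (hv : v ∈ p.vars) :
    coeff (Finsupp.single v 1) p ≠ 0 := by
  obtain ⟨d, hd, hvd⟩ := (mem_vars_iff_mem_support v).mp hv
  rcases eq_zero_or_eq_single_of_mem_support hp hd with rfl | ⟨w, rfl⟩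
  · simp at hvd
  · obtain rfl : v = w := by simpa using hvd
    exact mem_support_iff.mp hd

theorem eq_C_add_sum_of_totalDegree_le_one (hp : p.totalDegree ≤ 1) :
    p = C (coeff 0 p) + ∑ v ∈ p.vars, C (coeff (Finsupp.single v 1) p) * X v := by
  classical
  ext d
  simp only [coeff_add, coeff_C, coeff_sum, coeff_C_mul, coeff_X]
  by_cases hd : d ∈ p.support
  · rcases eq_zero_or_eq_single_of_mem_support hp hd with rfl | ⟨w, rfl⟩
    · simp
    · have hw : w ∈ p.vars := mem_vars_of_coeff_single_ne_zero (mem_support_iff.mp hd)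
      rw [Finset.sum_eq_single w (fun v _ hvw => by simp [Finsupp.single_left_inj, hvw])
        (absurd hw)]
      simp [eq_comm (a := (0 : σ →₀ ℕ))]
  · rw [notMem_support_iff.mp hd, Finset.sum_eq_zero fun v _ => by split_ifs with h <;> simp_all]
    split_ifs with h <;> simp_all

theorem isHomogeneous_sum_C_mul_X {ι : Type*} (s : Finset ι) (c : ι → R) (e : ι → σ) :
    (∑ z ∈ s, C (c z) * X (e z)).IsHomogeneous 1 :=
  IsHomogeneous.sum _ _ _ fun z _ => isHomogeneous_C_mul_X (c z) (e z)

end Linear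

section Homogeneous

variable {σ R : Type*} [CommSemiring R]

theorem homogeneousComponent_one_mul {g : MvPolynomial σ R} (hg : g.IsHomogeneous 1)
    (r : MvPolynomial σ R) : homogeneousComponent 1 (r * g) = C (coeff 0 r) * g := by
  conv_lhs => rw [← sum_homogeneousComponent r]
  rw [Finset.sum_mul, map_sum, Finset.sum_eq_single 0]
  · rw [homogeneousComponent_zero, homogeneousComponent_C_mul, homogeneousComponent_eq_self hg]
  · intro i _ hi
    rw [homogeneousComponent_of_mem ((homogeneousComponent_isHomogeneous i r).mul hg),
      if_neg (by omega)]
  · simp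

theorem mem_span_of_isHomogeneous_one_of_mem_ideal_span {s : Set (MvPolynomial σ R)}
    (hs : ∀ g ∈ s, g.IsHomogeneous 1) {p : MvPolynomial σ R} (hp : p.IsHomogeneous 1)
    (hps : p ∈ Ideal.span s) : p ∈ Submodule.span R s := by
  obtain ⟨c, hc, hsum⟩ := Submodule.mem_span_set.mp hps
  rw [← homogeneousComponent_eq_self hp, ← hsum, map_finsuppSum]
  refine Submodule.finsuppSum_mem _ _ _ _ fun g hg => ?_
  have hgs : g ∈ s := hc (Finsupp.mem_support_iff.mpr hg)
  rw [smul_eq_mul, homogeneousComponent_one_mul (hs g hgs), ← smul_eq_C_mul]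
  exact Submodule.smul_mem _ _ (Submodule.subset_span hgs)

end Homogeneous

theorem aeval_mem_of_forall_mem_vars {σ R A : Type*} [CommSemiring R] [CommSemiring A]
    [Algebra R A] {B : Subalgebra R A} {g : σ → A} {p : MvPolynomial σ R}
    (h : ∀ v ∈ p.vars, g v ∈ B) : aeval g p ∈ B := by
  have hp : p ∈ Algebra.adjoin R (X '' (p.vars : Set σ)) :=
    supported_eq_adjoin_X (R := R) (p.vars : Set σ) ▸ mem_supported_vars p
  have hmap : aeval g p ∈ (Algebra.adjoin R (X '' (p.vars : Set σ))).map (aeval g) :=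
    Subalgebra.mem_map.mpr ⟨p, hp, rfl⟩
  rw [AlgHom.map_adjoin] at hmap
  refine Algebra.adjoin_le ?_ hmap
  rintro _ ⟨_, ⟨v, hv, rfl⟩, rfl⟩
  simpa using h v hv

theorem sub_aeval_mem_of_forall_X_sub_mem {σ R : Type*} [CommRing R]
    {I : Ideal (MvPolynomial σ R)} {g : σ → MvPolynomial σ R} (hg : ∀ v, X v - g v ∈ I)
    (p : MvPolynomial σ R) :
    p - aeval g p ∈ I := by
  have h : (Ideal.Quotient.mkₐ R I).comp (aeval g) = Ideal.Quotient.mkₐ R I := by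
    ext v
    simpa [Ideal.Quotient.eq] using I.neg_mem_iff.mpr (hg v)
  rw [← Ideal.Quotient.eq]
  exact (DFunLike.congr_fun h p).symm

section LinearForms

variable {σ ι K : Type*} [Field K]

theorem injective_aeval_of_linearIndependent {l : ι → MvPolynomial σ K}
    (hl : LinearIndependent K l) (hlX : ∀ s, l s ∈ Submodule.span K (Set.range X)) :
    Function.Injective (aeval (R := K) l) := by
  obtain ⟨G, hG⟩ := (Finsupp.linearCombination K l).exists_leftInverse_of_injective
    (LinearMap.ker_eq_bot.mpr hl)
  let Ψ : MvPolynomial σ K →ₐ[K] MvPolynomial ι K :=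
    aeval fun v => Finsupp.linearCombination K X (G (X v))
  have hΨ : ∀ f ∈ Submodule.span K (Set.range X), Ψ f = Finsupp.linearCombination K X (G f) := by
    intro f hf
    induction hf using Submodule.span_induction with
    | mem x h => obtain ⟨v, rfl⟩ := h; exact aeval_X _ _
    | zero => simp
    | add x y _ _ hx hy => simp [hx, hy]
    | smul c x _ hx => simp [hx]
  have hinv : Ψ.comp (aeval l) = AlgHom.id K _ := by
    ext s
    have hGl : G (l s) = Finsupp.single s 1 := by
      simpa using DFunLike.congr_fun hG (Finsupp.single s 1)
    simp [hΨ _ (hlX s), hGl]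
  exact Function.LeftInverse.injective (g := Ψ) (DFunLike.congr_fun hinv)

theorem injective_aeval_C_sub {l : ι → MvPolynomial σ K} (c : ι → K)
    (hl : Function.Injective (aeval (R := K) l)) :
    Function.Injective (aeval (R := K) fun s => C (c s) - l s) := by
  let θ : MvPolynomial ι K →ₐ[K] MvPolynomial ι K := aeval fun s => C (c s) - X s
  have hθ : θ.comp θ = AlgHom.id K _ := by
    ext s
    simp [θ]
  have hcomp : (aeval (R := K) fun s => C (c s) - l s) = (aeval l).comp θ := by
    ext s
    simp [θ]
  rw [hcomp, AlgHom.coe_comp]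
  exact hl.comp (Function.LeftInverse.injective (g := θ) (DFunLike.congr_fun hθ))

end LinearForms

end MvPolynomial

namespace DPPE

variable {K : Type} [Field K] {n : ℕ}

section Coefficients

@[simp]
lemma cf_X (w : Vr n) (v : Fin n ⊕ Fin (n - 1)) (k : ℕ) :
    cf (X w : R K n) v k = if w = (v, k) then 1 else 0 := by
  classical
  simp [cf, coeff_X, Finsupp.single_left_inj, eq_comm]

@[simp]
lemma cf_C (c : K) (v : Fin n ⊕ Fin (n - 1)) (k : ℕ) : cf (C c : R K n) v k = 0 := by
  simp [cf, coeff_C, eq_comm (a := (0 : Vr n →₀ ℕ))]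

@[simp]
lemma cf_C_mul (c : K) (f : R K n) (v : Fin n ⊕ Fin (n - 1)) (k : ℕ) :
    cf (C c * f) v k = c * cf f v k :=
  coeff_C_mul _ _ _

@[simp]
lemma cf_add (f g : R K n) (v : Fin n ⊕ Fin (n - 1)) (k : ℕ) :
    cf (f + g) v k = cf f v k + cf g v k :=
  coeff_add _ _ _

@[simp]
lemma cf_sub (f g : R K n) (v : Fin n ⊕ Fin (n - 1)) (k : ℕ) :
    cf (f - g) v k = cf f v k - cf g v k :=
  coeff_sub _ _ _ _

@[simp]
lemma cf_smul (c : K) (f : R K n) (v : Fin n ⊕ Fin (n - 1)) (k : ℕ) :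
    cf (c • f) v k = c * cf f v k :=
  coeff_smul _ _ _

@[simp]
lemma cf_zero (v : Fin n ⊕ Fin (n - 1)) (k : ℕ) : cf (0 : R K n) v k = 0 :=
  coeff_zero _

@[simp]
lemma cf_sum {ι : Type*} (s : Finset ι) (f : ι → R K n) (v : Fin n ⊕ Fin (n - 1)) (k : ℕ) :
    cf (∑ i ∈ s, f i) v k = ∑ i ∈ s, cf (f i) v k :=
  coeff_sum _ _ _

lemma cf_sum_C_mul_X {ι : Type*} [Fintype ι] [DecidableEq ι] {e : ι → Fin n ⊕ Fin (n - 1)}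
    (he : Function.Injective e) (c : ι → K) (d : ℕ) (z : ι) (m : ℕ) :
    cf (∑ z', C (c z') * X ((e z', d) : Vr n)) (e z) m = if m = d then c z else 0 := by
  split_ifs with hm
  · simp [hm, he.eq_iff]
  · simp [Ne.symm hm]

end Coefficients

section Orders

lemma le_ordTot {A : Type} [CommSemiring A] {f : MvPolynomial (Vr n) A} {w : Vr n}
    (hw : w ∈ f.vars) : w.2 ≤ ordTot f := by
  obtain ⟨b, hb⟩ := Finset.max_of_mem (Finset.mem_image_of_mem Prod.snd hw)
  have := Finset.le_max (Finset.mem_image_of_mem Prod.snd hw)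
  rw [hb, WithBot.coe_le_coe] at this
  rwa [ordTot, hb, WithBot.unbotD_coe]

lemma exists_mem_vars_snd_eq_ordTot {A : Type} [CommSemiring A] {f : MvPolynomial (Vr n) A}
    (hf : f.vars.Nonempty) : ∃ w ∈ f.vars, w.2 = ordTot f := by
  obtain ⟨w, hw⟩ := hf
  obtain ⟨b, hb⟩ := Finset.max_of_mem (Finset.mem_image_of_mem Prod.snd hw)
  obtain ⟨w', hw', rfl⟩ := Finset.mem_image.mp (Finset.mem_of_max hb)
  exact ⟨w', hw', by rw [ordTot, hb, WithBot.unbotD_coe]⟩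

lemma le_ordIn {A : Type} [CommSemiring A] {f : MvPolynomial (Vr n) A}
    {v : Fin n ⊕ Fin (n - 1)} {m : ℕ} (hv : (v, m) ∈ f.vars) : (m : ℤ) ≤ ordIn f v := by
  have hm : (m : ℤ) ∈ (f.vars.filter (fun w => w.1 = v)).image (fun w => (w.2 : ℤ)) :=
    Finset.mem_image.mpr ⟨(v, m), Finset.mem_filter.mpr ⟨hv, rfl⟩, rfl⟩
  obtain ⟨b, hb⟩ := Finset.max_of_mem hm
  have := Finset.le_max hm
  rw [hb, WithBot.coe_le_coe] at this
  rwa [ordIn, hb, WithBot.unbotD_coe]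

lemma ordIn_le {A : Type} [CommSemiring A] {f : MvPolynomial (Vr n) A}
    {v : Fin n ⊕ Fin (n - 1)} {k : ℕ} (h : ∀ w ∈ f.vars, w.2 ≤ k) : ordIn f v ≤ k := by
  rw [ordIn]
  cases hb : ((f.vars.filter (fun w => w.1 = v)).image (fun w => (w.2 : ℤ))).max with
  | bot => simp
  | coe b =>
    obtain ⟨w, hw, rfl⟩ := Finset.mem_image.mp (Finset.mem_of_max hb)
    simpa using h w (Finset.mem_filter.mp hw).1

lemma exists_mem_vars_of_ordIn_nonneg {A : Type} [CommSemiring A] {f : MvPolynomial (Vr n) A}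
    {v : Fin n ⊕ Fin (n - 1)} (h : 0 ≤ ordIn f v) : ∃ m, (v, m) ∈ f.vars := by
  rw [ordIn] at h
  cases hb : ((f.vars.filter (fun w => w.1 = v)).image (fun w => (w.2 : ℤ))).max with
  | bot => simp [hb] at h
  | coe b =>
    obtain ⟨w, hw, -⟩ := Finset.mem_image.mp (Finset.mem_of_max hb)
    obtain ⟨hw, rfl⟩ := Finset.mem_filter.mp hw
    exact ⟨w.2, by simpa using hw⟩

end Orders

section LowSpan

noncomputable def lowSpan {ι : Type*} (b : ι → ℕ → R K n) (u : ℕ) : Submodule K (R K n) :=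
  Submodule.span K {f | ∃ z, ∃ m < u, f = b z m}

variable {ι : Type*} {b : ι → ℕ → R K n}

lemma mem_lowSpan {z : ι} {m u : ℕ} (h : m < u) : b z m ∈ lowSpan b u :=
  Submodule.subset_span ⟨z, m, h, rfl⟩

lemma lowSpan_mono {u u' : ℕ} (h : u ≤ u') : lowSpan b u ≤ lowSpan b u' :=
  Submodule.span_mono fun _ ⟨z, m, hm, hf⟩ => ⟨z, m, hm.trans_le h, hf⟩

lemma lowSpan_zero : lowSpan b 0 = ⊥ := by
  simp [lowSpan]

variable {e : ι → Fin n ⊕ Fin (n - 1)}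

lemma cf_eq_zero_of_mem_lowSpan {u : ℕ} {f : R K n}
    (hf : f ∈ lowSpan (fun z m => (X (e z, m) : R K n)) u) (v : Fin n ⊕ Fin (n - 1)) {k : ℕ}
    (hk : u ≤ k) : cf f v k = 0 := by
  induction hf using Submodule.span_induction with
  | mem x h =>
    obtain ⟨z, m, hm, rfl⟩ := h
    simp only [cf_X, Prod.mk.injEq]
    exact if_neg fun h => by omega
  | zero => exact cf_zero v k
  | add x y _ _ hx hy => rw [cf_add, hx, hy, add_zero]
  | smul c x _ hx => rw [cf_smul, hx, mul_zero]

lemma lowSpan_le_homogeneousSubmodule (u : ℕ) :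
    lowSpan (fun z m => (X (e z, m) : R K n)) u ≤ homogeneousSubmodule (Vr n) K 1 :=
  Submodule.span_le.mpr fun _ ⟨_, _, _, hf⟩ => hf ▸ isHomogeneous_X K _

lemma lowSpan_le_span_X (u : ℕ) :
    lowSpan (fun z m => (X (e z, m) : R K n)) u ≤ Submodule.span K (Set.range X) :=
  Submodule.span_le.mpr fun _ ⟨z, m, _, hf⟩ => Submodule.subset_span ⟨(e z, m), hf.symm⟩

lemma mem_lowSpan_of_forall_mem_vars {f : R K n} (hf : f.totalDegree ≤ 1) (hf0 : coeff 0 f = 0)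
    {u : ℕ} (hvars : ∀ w ∈ f.vars, ∃ z, w.1 = e z ∧ w.2 < u) :
    f ∈ lowSpan (fun z m => (X (e z, m) : R K n)) u := by
  rw [eq_C_add_sum_of_totalDegree_le_one hf, hf0, map_zero, zero_add]
  refine Submodule.sum_mem _ fun w hw => ?_
  obtain ⟨z, hz, hwu⟩ := hvars w hw
  rw [← smul_eq_C_mul, show w = (e z, w.2) from Prod.ext hz rfl]
  exact Submodule.smul_mem _ _ (mem_lowSpan hwu)

lemma sub_sum_mem_lowSpan [Fintype ι] [DecidableEq ι] (he : Function.Injective e) {d : ℕ}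
    {f : R K n} (hf : f ∈ lowSpan (fun z m => (X (e z, m) : R K n)) (d + 1)) :
    f - ∑ z, C (cf f (e z) d) * X (e z, d) ∈ lowSpan (fun z m => (X (e z, m) : R K n)) d := by
  induction hf using Submodule.span_induction with
  | mem x h =>
    obtain ⟨z, m, hm, rfl⟩ := h
    rcases (Nat.lt_succ_iff.mp hm).lt_or_eq with hm | rfl
    · simpa [he.eq_iff, hm.ne] using mem_lowSpan hm
    · simp [he.eq_iff]
  | zero => simp
  | add x y _ _ hx hy =>
    convert Submodule.add_mem _ hx hy using 1
    simp only [cf_add, map_add, add_mul, Finset.sum_add_distrib]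
    ring
  | smul c x _ hx =>
    convert Submodule.smul_mem _ c hx using 1
    simp only [smul_sub, Finset.smul_sum, smul_eq_C_mul, cf_C_mul, map_mul, mul_assoc]

lemma exists_top_order {B : R K n} (hB0 : B ≠ 0) (hB : B.totalDegree ≤ 1) (hBc : coeff 0 B = 0)
    (hBx : xOnly B) : ∃ d i, B ∈ lowSpan (fun i m => (X (Sum.inl i, m) : R K n)) (d + 1) ∧
      cf B (Sum.inl i) d ≠ 0 := by
  have hvars : B.vars.Nonempty := by
    rw [Finset.nonempty_iff_ne_empty]
    intro h
    rw [eq_C_add_sum_of_totalDegree_le_one hB, hBc, h] at hB0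
    simp at hB0
  obtain ⟨w, hw, hwd⟩ := exists_mem_vars_snd_eq_ordTot hvars
  obtain ⟨i, hi⟩ := Sum.isLeft_iff.mp (hBx w hw)
  refine ⟨ordTot B, i, mem_lowSpan_of_forall_mem_vars hB hBc fun v hv => ?_, ?_⟩
  · obtain ⟨i', hi'⟩ := Sum.isLeft_iff.mp (hBx v hv)
    exact ⟨i', hi', Nat.lt_succ_of_le (le_ordTot hv)⟩
  · rw [cf, ← hi, ← hwd]
    exact coeff_single_ne_zero_of_mem_vars hB hw

end LowSpan

def xVarExcept (i₀ : Fin n) (p : {i // i ≠ i₀} × ℕ) : Vr n :=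
  (Sum.inl p.1, p.2)

namespace Sys

variable (S : Sys K n)

lemma D_smul (c : K) (f : R K n) : S.D (c • f) = S.der c • f + c • S.D f := by
  simp only [smul_eq_C_mul, Derivation.leibniz, smul_eq_mul, S.hD_C]
  ring

lemma iterate_D_C (c : K) (k : ℕ) : (⇑S.D)^[k] (C c) = C ((⇑S.der)^[k] c) :=
  (Function.Semiconj.iterate_right (f := C) (fun c => (S.hD_C c).symm) k c).symm

lemma D_mem_lowSpan {ι : Type*} {b : ι → ℕ → R K n} (hb : ∀ z m, S.D (b z m) = b z (m + 1))
    {u : ℕ} {f : R K n} (hf : f ∈ lowSpan b u) : S.D f ∈ lowSpan b (u + 1) := by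
  induction hf using Submodule.span_induction with
  | mem x h =>
    obtain ⟨z, m, hm, rfl⟩ := h
    rw [hb]
    exact mem_lowSpan (by omega)
  | zero => rw [map_zero]; exact zero_mem _
  | add x y _ _ hx hy => rw [map_add]; exact add_mem hx hy
  | smul c x hx₀ hx =>
    rw [D_smul]
    exact add_mem (Submodule.smul_mem _ _ (lowSpan_mono (by omega) hx₀))
      (Submodule.smul_mem _ _ hx)

/-- `∂(c b_{z,m}) = c b_{z,m+1} + ∂(c) b_{z,m}`: differentiating shifts the top part and only
adds terms of lower order. -/
lemma iterate_D_sum_add {ι : Type*} [Fintype ι] {b : ι → ℕ → R K n}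
    (hb : ∀ z m, S.D (b z m) = b z (m + 1)) (c : ι → K) {m₀ : ℕ} {w₀ : R K n}
    (hw₀ : w₀ ∈ lowSpan b m₀) (k : ℕ) :
    ∃ w ∈ lowSpan b (m₀ + k),
      (⇑S.D)^[k] (∑ z, C (c z) * b z m₀ + w₀) = ∑ z, C (c z) * b z (m₀ + k) + w := by
  induction k with
  | zero => exact ⟨w₀, hw₀, rfl⟩
  | succ k ih =>
    obtain ⟨w, hw, hDk⟩ := ih
    refine ⟨∑ z, C (S.der (c z)) * b z (m₀ + k) + S.D w, add_mem (sum_mem fun z _ => ?_) ?_, ?_⟩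
    · rw [← smul_eq_C_mul]
      exact Submodule.smul_mem _ _ (mem_lowSpan (by omega))
    · exact S.D_mem_lowSpan hb hw
    · rw [Function.iterate_succ_apply', hDk, map_add, map_sum]
      simp only [Derivation.leibniz, smul_eq_mul, S.hD_C, hb, ← add_assoc m₀ k 1,
        Finset.sum_add_distrib, mul_comm (b _ _)]
      abel

lemma map_D_of_forall_X {φ : R K n →ₐ[K] R K n} (hφ : ∀ v, φ (S.D (X v)) = S.D (φ (X v)))
    (f : R K n) : φ (S.D f) = S.D (φ f) := by
  induction f using MvPolynomial.induction_on with
  | C c => rw [S.hD_C, algHom_C, algHom_C, algebraMap_eq, S.hD_C]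
  | add p q hp hq => simp only [map_add, hp, hq]
  | mul_X p v hp => simp only [Derivation.leibniz, smul_eq_mul, map_add, map_mul, hp, hφ]

lemma map_iterate_D_of_forall_X {φ : R K n →ₐ[K] R K n}
    (hφ : ∀ v, φ (S.D (X v)) = S.D (φ (X v))) (f : R K n) (k : ℕ) :
    φ ((⇑S.D)^[k] f) = (⇑S.D)^[k] (φ f) :=
  Function.Semiconj.iterate_right (S.map_D_of_forall_X hφ) k f

variable (S : Sys K n)

lemma cf_F_inr (i : Fin n) (j : Fin (n - 1)) (k : ℕ) :
    cf (S.F i) (Sum.inr j) k = cf (S.H i) (Sum.inr j) k := by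
  simp [F]

lemma totalDegree_H_le (i : Fin n) : (S.H i).totalDegree ≤ 1 := by
  by_cases h : S.H i = 0
  · simp [h]
  · exact ((S.H_hom i).totalDegree h).le

lemma coeff_zero_H (i : Fin n) : coeff 0 (S.H i) = 0 :=
  (S.H_hom i).coeff_eq_zero (by simp)

lemma mem_vars_F_of_mem_vars_H {i : Fin n} {j : Fin (n - 1)} {m : ℕ}
    (h : (Sum.inr j, m) ∈ (S.H i).vars) : (Sum.inr j, m) ∈ (S.F i).vars := by
  apply mem_vars_of_coeff_single_ne_zero
  rw [← cf, cf_F_inr, cf]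
  exact coeff_single_ne_zero_of_mem_vars (S.totalDegree_H_le i) h

noncomputable def coeffMat : Matrix (Fin n) (Fin (n - 1)) K :=
  Matrix.of fun i j => cf (S.H i) (Sum.inr j) 0

section OrderZero

variable {S} (hN : S.Nn = 0)
include hN

lemma o_eq_zero (i : Fin n) : S.o i = 0 :=
  Finset.sum_eq_zero_iff.mp hN i (Finset.mem_univ i)

lemma snd_eq_zero_of_mem_vars_F {i : Fin n} {w : Vr n} (hw : w ∈ (S.F i).vars) : w.2 = 0 := by
  have := le_ordTot hw
  rwa [← Sys.o, o_eq_zero hN, Nat.le_zero] at this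

lemma exists_eq_inr_of_mem_vars_H {i : Fin n} {w : Vr n} (hw : w ∈ (S.H i).vars) :
    ∃ j, w = (Sum.inr j, 0) := by
  obtain ⟨j, hj⟩ := Sum.isRight_iff.mp (S.H_u i w hw)
  have hw' : w = (Sum.inr j, w.2) := Prod.ext hj rfl
  rw [hw'] at hw ⊢
  rw [snd_eq_zero_of_mem_vars_F hN (S.mem_vars_F_of_mem_vars_H hw)]
  exact ⟨j, rfl⟩

lemma gam_eq_zero (j : Fin (n - 1)) : S.gam j = 0 := by
  have hle : ∀ i, ordIn (S.F i) (Sum.inr j) ≤ 0 := fun i =>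
    mod_cast ordIn_le fun w hw => (snd_eq_zero_of_mem_vars_F hN hw).le
  obtain ⟨i, hi⟩ := S.param j
  obtain ⟨m, hm⟩ := exists_mem_vars_of_ordIn_nonneg hi
  have hi0 : ordIn (S.F i) (Sum.inr j) = 0 :=
    (hle i).antisymm ((Int.natCast_nonneg m).trans (le_ordIn (S.mem_vars_F_of_mem_vars_H hm)))
  have hgam : S.gamZ j = 0 := by
    rw [gamZ]
    refine le_antisymm ?_ (Finset.le_inf' _ _ fun i' _ => ?_)
    · simpa [o_eq_zero hN, hi0] using
        Finset.inf'_le (fun i' => (S.o i' : ℤ) - ordIn (S.F i') (Sum.inr j)) (Finset.mem_univ i)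
    · simpa [o_eq_zero hN] using hle i'
  simp [gam, hgam]

lemma H_eq_sum (i : Fin n) : S.H i = ∑ j, C (S.coeffMat i j) * X (Sum.inr j, 0) := by
  have hH : S.H i ∈ lowSpan (fun j m => (X (Sum.inr j, m) : R K n)) (0 + 1) :=
    mem_lowSpan_of_forall_mem_vars (S.totalDegree_H_le i) (S.coeff_zero_H i) fun w hw => by
      obtain ⟨j, rfl⟩ := exists_eq_inr_of_mem_vars_H hN hw
      exact ⟨j, rfl, Nat.zero_lt_one⟩
  have := sub_sum_mem_lowSpan Sum.inr_injective hH
  rw [lowSpan_zero, Submodule.mem_bot, sub_eq_zero] at this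
  exact this

lemma Smat_eq_submatrix : S.Smat = S.coeffMat.submatrix id Fin.revPerm := by
  ext i j
  simp [Smat, coeffMat, gam_eq_zero hN, o_eq_zero hN, cf_F_inr]

lemma rank_Smat : S.Smat.rank = S.coeffMat.rank := by
  rw [Smat_eq_submatrix hN]
  exact S.coeffMat.rank_submatrix (Equiv.refl _) Fin.revPerm

end OrderZero

noncomputable def leftKer : Submodule K (Fin n → K) :=
  LinearMap.ker S.coeffMat.vecMulLinear

lemma mem_leftKer_iff {α : Fin n → K} : α ∈ S.leftKer ↔ ∀ j, ∑ i, α i * S.coeffMat i j = 0 := by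
  simp [leftKer, funext_iff, Matrix.vecMul, dotProduct]

lemma finrank_leftKer : Module.finrank K S.leftKer = n - S.coeffMat.rank := by
  have h := LinearMap.finrank_range_add_finrank_ker S.coeffMat.vecMulLinear
  rw [← Matrix.mulVecLin_transpose, ← Matrix.rank, Matrix.rank_transpose, Module.finrank_fin_fun]
    at h
  rw [leftKer, ← Matrix.mulVecLin_transpose]
  omega

lemma rank_coeffMat_le : S.coeffMat.rank ≤ n - 1 := by
  simpa using S.coeffMat.rank_le_card_width

noncomputable def xi (i : Fin n) (m : ℕ) : R K n :=
  X (Sum.inl i, m) - C ((⇑S.der)^[m] (S.a i))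

lemma D_xi (i : Fin n) (m : ℕ) : S.D (S.xi i m) = S.xi i (m + 1) := by
  rw [xi, map_sub, S.hD_X, S.hD_C, xi, Function.iterate_succ_apply']

noncomputable def rel (α : Fin n → K) : R K n :=
  ∑ i, C (α i) * S.xi i 0

lemma cf_rel (α : Fin n → K) (i : Fin n) : cf (S.rel α) (Sum.inl i) 0 = α i := by
  classical
  simp [rel, xi, Finset.sum_ite_eq']

lemma rel_ne_zero {α : Fin n → K} (hα : α ≠ 0) : S.rel α ≠ 0 := by
  obtain ⟨i, hi⟩ := Function.ne_iff.mp hα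
  intro h
  apply hi
  rw [← S.cf_rel α i, h, cf_zero, Pi.zero_apply]

lemma xOnly_rel (α : Fin n → K) : xOnly (S.rel α) := by
  have : S.rel α ∈ supported K {w : Vr n | w.1.isLeft} :=
    Subalgebra.sum_mem _ fun i _ => Subalgebra.mul_mem _ (Subalgebra.algebraMap_mem _ _)
      (Subalgebra.sub_mem _ (X_mem_supported.mpr rfl) (Subalgebra.algebraMap_mem _ _))
  exact fun w hw => mem_supported.mp this hw

lemma isLinearPoly_rel (α : Fin n → K) : IsLinearPoly (S.rel α) := by
  refine (totalDegree_finsetSum _ _).trans (Finset.sup_le fun i _ => ?_)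
  refine (totalDegree_mul _ _).trans ?_
  rw [totalDegree_C, zero_add, xi]
  exact (totalDegree_sub_C_le _ _).trans_eq (totalDegree_X _)

lemma subst_C (c : K) : S.subst (C c) = C c := by
  rw [subst, aeval_C, algebraMap_eq]

lemma subst_X_inl (i : Fin n) (k : ℕ) :
    S.subst (X (Sum.inl i, k)) = (⇑S.D)^[k] (C (S.a i) - S.H i) :=
  aeval_X _ _

lemma subst_X_inr (j : Fin (n - 1)) (k : ℕ) : S.subst (X (Sum.inr j, k)) = X (Sum.inr j, k) :=
  aeval_X _ _

lemma subst_iterate_D (f : R K n) (k : ℕ) :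
    S.subst ((⇑S.D)^[k] f) = (⇑S.D)^[k] (S.subst f) := by
  refine S.map_iterate_D_of_forall_X (fun ⟨v, m⟩ => ?_) f k
  rcases v with i | j
  · rw [S.hD_X, subst_X_inl, subst_X_inl, Function.iterate_succ_apply']
  · rw [S.hD_X, subst_X_inr, subst_X_inr, S.hD_X]

lemma subst_xi_zero (i : Fin n) : S.subst (S.xi i 0) = -S.H i := by
  rw [xi, map_sub, subst_X_inl, subst_C]
  simp

lemma sum_C_mul_H_eq_zero (hN : S.Nn = 0) {α : Fin n → K} (hα : α ∈ S.leftKer) :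
    ∑ i, C (α i) * S.H i = 0 := by
  simp only [H_eq_sum hN, Finset.mul_sum, ← mul_assoc, ← map_mul]
  rw [Finset.sum_comm]
  refine Finset.sum_eq_zero fun j _ => ?_
  rw [← Finset.sum_mul, ← map_sum, S.mem_leftKer_iff.mp hα j, map_zero, zero_mul]

lemma subst_rel (hN : S.Nn = 0) {α : Fin n → K} (hα : α ∈ S.leftKer) : S.subst (S.rel α) = 0 := by
  simp only [rel, map_sum, map_mul, subst_C, subst_xi_zero, mul_neg, Finset.sum_neg_distrib,
    S.sum_C_mul_H_eq_zero hN hα, neg_zero]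

lemma subst_eq_zero_of_mem_span (hN : S.Nn = 0) {α : Fin n → K} (hα : α ∈ S.leftKer) {p : R K n}
    (hp : p ∈ Ideal.span {g | ∃ k, g = (⇑S.D)^[k] (S.rel α)}) : S.subst p = 0 := by
  refine (Ideal.span_le (I := RingHom.ker S.subst)).mpr ?_ hp
  rintro g ⟨k, rfl⟩
  rw [SetLike.mem_coe, RingHom.mem_ker, subst_iterate_D, subst_rel S hN hα, iterate_map_zero]

section Elimination

lemma subst_rename_xVarExcept {i₀ : Fin n} (q : MvPolynomial ({i // i ≠ i₀} × ℕ) K) :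
    S.subst (rename (xVarExcept i₀) q) =
      aeval (fun p => C ((⇑S.der)^[p.2] (S.a p.1)) - (⇑S.D)^[p.2] (S.H p.1)) q := by
  rw [subst, aeval_rename]
  congr 2
  funext p
  simp [xVarExcept, iterate_map_sub, iterate_D_C]

variable {S} (hN : S.Nn = 0)
include hN

lemma iterate_D_H (i : Fin n) (k : ℕ) :
    ∃ w ∈ lowSpan (fun j m => (X (Sum.inr j, m) : R K n)) k,
      (⇑S.D)^[k] (S.H i) = ∑ j, C (S.coeffMat i j) * X (Sum.inr j, k) + w := by
  simpa [← H_eq_sum hN] using S.iterate_D_sum_add (fun j m => S.hD_X (Sum.inr j) m)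
    (S.coeffMat i) (m₀ := 0) (zero_mem _) k

lemma cf_iterate_D_H (i : Fin n) (j : Fin (n - 1)) {k b : ℕ} (hkb : k ≤ b) :
    cf ((⇑S.D)^[k] (S.H i)) (Sum.inr j) b = if k = b then S.coeffMat i j else 0 := by
  classical
  obtain ⟨w, hw, hk⟩ := iterate_D_H hN i k
  rw [hk, cf_add, cf_eq_zero_of_mem_lowSpan hw _ hkb, add_zero,
    cf_sum_C_mul_X Sum.inr_injective]
  simp only [eq_comm]

lemma iterate_D_H_mem_span_X (i : Fin n) (k : ℕ) :
    (⇑S.D)^[k] (S.H i) ∈ Submodule.span K (Set.range X) := by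
  obtain ⟨w, hw, hk⟩ := iterate_D_H hN i k
  rw [hk]
  refine add_mem (sum_mem fun j _ => ?_) (lowSpan_le_span_X k hw)
  rw [← smul_eq_C_mul]
  exact Submodule.smul_mem _ _ (Submodule.subset_span ⟨_, rfl⟩)

variable {i₀ : Fin n} (hker : ∀ β ∈ S.leftKer, β i₀ = 0 → β = 0)
include hker

/-- Reading off the coefficients of the `u_{j,b}` turns a relation among the `∂^m Hᵢ`, `m ≤ b`,
into a left kernel vector supported on `i ≠ i₀`. -/
lemma coeff_eq_zero_of_sum_smul_iterate_D_H_eq_zero {s : Finset ({i // i ≠ i₀} × ℕ)}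
    {g : {i // i ≠ i₀} × ℕ → K} {b : ℕ} (hb : ∀ p ∈ s, p.2 ≤ b)
    (hsum : ∑ p ∈ s, g p • (⇑S.D)^[p.2] (S.H p.1) = 0) {p : {i // i ≠ i₀} × ℕ} (hp : p ∈ s)
    (hpb : p.2 = b) : g p = 0 := by
  classical
  let β : Fin n → K := ∑ q ∈ s with q.2 = b, g q • Pi.single (q.1 : Fin n) 1
  have hβ : β ∈ S.leftKer := by
    refine S.mem_leftKer_iff.mpr fun j => ?_
    have := congrArg (fun f => cf f (Sum.inr j) b) hsum
    simp only [cf_sum, cf_smul, cf_zero] at this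
    rw [Finset.sum_congr rfl fun q hq => by rw [cf_iterate_D_H hN _ _ (hb q hq)]] at this
    simp only [mul_ite, mul_zero] at this
    rw [← Finset.sum_filter] at this
    calc ∑ i, β i * S.coeffMat i j
        = ∑ q ∈ s with q.2 = b, ∑ i,
            g q * ((Pi.single (q.1 : Fin n) (1 : K) : Fin n → K) i * S.coeffMat i j) := by
          simp only [β, Finset.sum_apply, Pi.smul_apply, smul_eq_mul, Finset.sum_mul, mul_assoc]
          exact Finset.sum_comm
      _ = 0 := by simpa [Pi.single_apply] using this
  have hβp := congrFun (hker β hβ (by simp [β, Finset.sum_apply,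
    fun q : {i // i ≠ i₀} × ℕ => (q.1.2 : (q.1 : Fin n) ≠ i₀).symm])) p.1
  simp only [β, Finset.sum_apply, Pi.smul_apply, Pi.single_apply, smul_eq_mul, mul_ite, mul_one,
    mul_zero, Pi.zero_apply] at hβp
  rwa [Finset.sum_eq_single p (fun q hq hqp => if_neg fun h => hqp ?_) (by simp [hp, hpb]),
    if_pos rfl] at hβp
  exact Prod.ext (Subtype.ext h.symm) ((Finset.mem_filter.mp hq).2.trans hpb.symm)

lemma linearIndependent_iterate_D_H :
    LinearIndependent K fun p : {i // i ≠ i₀} × ℕ => (⇑S.D)^[p.2] (S.H p.1) := by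
  classical
  rw [linearIndependent_iff']
  suffices h : ∀ (b : ℕ) (s : Finset ({i // i ≠ i₀} × ℕ)) (g : {i // i ≠ i₀} × ℕ → K),
      (∀ p ∈ s, p.2 ≤ b) →
      ∑ p ∈ s, g p • (⇑S.D)^[p.2] (S.H p.1) = 0 → ∀ p ∈ s, g p = 0 from
    fun s g hsum => h _ s g (fun p hp => Finset.le_sup (f := Prod.snd) hp) hsum
  intro b
  induction b with
  | zero =>
    exact fun s g hb hsum p hp =>
      coeff_eq_zero_of_sum_smul_iterate_D_H_eq_zero hN hker hb hsum hp (Nat.le_zero.mp (hb p hp))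
  | succ b ih =>
    intro s g hb hsum p hp
    have htop := fun q (hq : q ∈ s) =>
      coeff_eq_zero_of_sum_smul_iterate_D_H_eq_zero hN hker hb hsum hq
    by_cases hpb : p.2 = b + 1
    · exact htop p hp hpb
    refine ih (s.filter (·.2 ≠ b + 1)) g (fun q hq => ?_) ?_ p (Finset.mem_filter.mpr ⟨hp, hpb⟩)
    · have hq := Finset.mem_filter.mp hq
      have := hb q hq.1
      omega
    · rw [Finset.sum_filter_of_ne]
      · exact hsum
      · exact fun q hq hne hqb => hne (by rw [htop q hq hqb, zero_smul])

lemma eq_zero_of_mem_range_rename_of_subst_eq_zero {p : R K n}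
    (hp : p ∈ (rename (xVarExcept i₀)).range) (h : S.subst p = 0) : p = 0 := by
  obtain ⟨q, rfl⟩ := (AlgHom.mem_range _).mp hp
  have hinj := injective_aeval_C_sub (fun p : {i // i ≠ i₀} × ℕ => (⇑S.der)^[p.2] (S.a p.1))
    (injective_aeval_of_linearIndependent (linearIndependent_iterate_D_H hN hker)
      fun p => iterate_D_H_mem_span_X hN _ _)
  rw [subst_rename_xVarExcept] at h
  rw [hinj (h.trans (map_zero _).symm), map_zero]

end Elimination

lemma exists_forall_eq_smul_of_rank_eq (hrk : S.coeffMat.rank = n - 1) :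
    ∃ α ∈ S.leftKer, α ≠ 0 ∧ ∀ β ∈ S.leftKer, ∃ c : K, β = c • α := by
  have h1 : Module.finrank K S.leftKer = 1 := by
    have := S.hn
    rw [finrank_leftKer, hrk]
    omega
  obtain ⟨⟨α, hα⟩, hne, h⟩ := finrank_eq_one_iff'.mp h1
  refine ⟨α, hα, fun h0 => hne (Subtype.ext h0), fun β hβ => ?_⟩
  obtain ⟨c, hc⟩ := h ⟨β, hβ⟩
  exact ⟨c, (congrArg Subtype.val hc).symm⟩

lemma iterate_D_rel (α : Fin n → K) (k : ℕ) :
    ∃ w ∈ lowSpan S.xi k, (⇑S.D)^[k] (S.rel α) = ∑ i, C (α i) * S.xi i k + w := by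
  simpa [rel] using S.iterate_D_sum_add S.D_xi α (m₀ := 0) (zero_mem _) k

lemma xi_mem_lowSpan_of_ne {i i₀ : Fin n} (hi : i ≠ i₀) {m u : ℕ} (hm : m < u) :
    S.xi i m ∈ lowSpan (fun i : {i // i ≠ i₀} => S.xi i) u :=
  mem_lowSpan (b := fun i : {i // i ≠ i₀} => S.xi i) (z := ⟨i, hi⟩) hm

/-- `∂ᵏ(∑ αᵢ ξ_{i,0}) = ∑ αᵢ ξ_{i,k} + (lower order)` can be solved for `ξ_{i₀,k}` since
`α_{i₀} ≠ 0`. -/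
lemma lowSpan_xi_le {α : Fin n → K} {i₀ : Fin n} (hα : α i₀ ≠ 0) (k : ℕ) :
    lowSpan S.xi k ≤ (Ideal.span {g | ∃ k, g = (⇑S.D)^[k] (S.rel α)}).restrictScalars K ⊔
      lowSpan (fun i : {i // i ≠ i₀} => S.xi i) k := by
  set J := (Ideal.span {g | ∃ k, g = (⇑S.D)^[k] (S.rel α)}).restrictScalars K
  have hmono : ∀ k, J ⊔ lowSpan (fun i : {i // i ≠ i₀} => S.xi i) k ≤
      J ⊔ lowSpan (fun i : {i // i ≠ i₀} => S.xi i) (k + 1) :=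
    fun k => sup_le_sup_left (lowSpan_mono k.le_succ) _
  induction k with
  | zero => simp [lowSpan_zero]
  | succ k ih =>
    refine Submodule.span_le.mpr ?_
    rintro _ ⟨i, m, hm, rfl⟩
    rcases (Nat.lt_succ_iff.mp hm).lt_or_eq with hm | rfl
    · exact hmono k (ih (mem_lowSpan hm))
    by_cases hi : i = i₀
    · subst hi
      obtain ⟨w, hw, hDk⟩ := S.iterate_D_rel α m
      have hxi : S.xi i m = (α i)⁻¹ • ((⇑S.D)^[m] (S.rel α) -
          ∑ i' ∈ Finset.univ.erase i, α i' • S.xi i' m - w) := by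
        rw [hDk, ← Finset.add_sum_erase _ _ (Finset.mem_univ i)]
        simp only [smul_eq_C_mul]
        rw [show ∀ x y z : R K n, x + y + z - y - z = x from fun x y z => by ring, ← mul_assoc,
          ← map_mul, inv_mul_cancel₀ hα, map_one, one_mul]
      rw [hxi]
      refine Submodule.smul_mem _ _ (sub_mem (sub_mem ?_ (sum_mem fun i' hi' => ?_)) ?_)
      · exact Submodule.mem_sup_left
          ((Submodule.restrictScalars_mem K _ _).mpr (Ideal.subset_span ⟨m, rfl⟩))
      · exact Submodule.smul_mem _ _ (Submodule.mem_sup_right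
          (S.xi_mem_lowSpan_of_ne (Finset.ne_of_mem_erase hi') (Nat.lt_succ_self m)))
      · exact hmono m (ih hw)
    · exact Submodule.mem_sup_right (S.xi_mem_lowSpan_of_ne hi (Nat.lt_succ_self m))

lemma exists_xi_sub_mem_span {α : Fin n → K} {i₀ : Fin n} (hα : α i₀ ≠ 0) (k : ℕ) :
    ∃ θ ∈ lowSpan (fun i : {i // i ≠ i₀} => S.xi i) (k + 1),
      S.xi i₀ k - θ ∈ Ideal.span {g | ∃ k, g = (⇑S.D)^[k] (S.rel α)} := by
  obtain ⟨y, hy, θ, hθ, hyθ⟩ :=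
    Submodule.mem_sup.mp (S.lowSpan_xi_le hα (k + 1) (mem_lowSpan (Nat.lt_succ_self k)))
  exact ⟨θ, hθ, by rwa [← hyθ, add_sub_cancel_right]⟩

lemma lowSpan_xi_le_range_rename (i₀ : Fin n) (u : ℕ) :
    lowSpan (fun i : {i // i ≠ i₀} => S.xi i) u ≤
      Subalgebra.toSubmodule (rename (xVarExcept i₀)).range := by
  refine Submodule.span_le.mpr ?_
  rintro _ ⟨i, m, -, rfl⟩
  refine ⟨X (i, m) - C ((⇑S.der)^[m] (S.a i)), ?_⟩
  change rename _ (X (i, m) - C _) = S.xi i m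
  rw [map_sub, rename_X, rename_C]
  rfl

/-- The elimination step: substituting for each `x_{i₀,k}` its expression modulo the ideal
leaves a polynomial in the `x_{i,k}`, `i ≠ i₀`, on which the substitution is injective. -/
lemma mem_span_rel_of_subst_eq_zero (hN : S.Nn = 0) {α : Fin n → K} (hα : α ∈ S.leftKer)
    {i₀ : Fin n} (hαi₀ : α i₀ ≠ 0) (hker : ∀ β ∈ S.leftKer, β i₀ = 0 → β = 0) {f : R K n}
    (hf : xOnly f) (hsf : S.subst f = 0) :
    f ∈ Ideal.span {g | ∃ k, g = (⇑S.D)^[k] (S.rel α)} := by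
  choose θ hθ hθJ using S.exists_xi_sub_mem_span hαi₀
  let g : Vr n → R K n := fun v =>
    if v.1 = Sum.inl i₀ then θ v.2 + C ((⇑S.der)^[v.2] (S.a i₀)) else X v
  have hXg : ∀ v, X v - g v ∈ Ideal.span {g | ∃ k, g = (⇑S.D)^[k] (S.rel α)} := by
    rintro ⟨v, m⟩
    by_cases hv : v = Sum.inl i₀
    · subst hv
      convert hθJ m using 1
      simp only [g, if_pos rfl, xi]
      ring
    · simp [g, hv]
  have hfJ := sub_aeval_mem_of_forall_X_sub_mem hXg f
  have hrange : aeval g f ∈ (rename (xVarExcept i₀)).range := by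
    refine aeval_mem_of_forall_mem_vars fun v hv => ?_
    obtain ⟨i, hi⟩ := Sum.isLeft_iff.mp (hf v hv)
    by_cases h : i = i₀
    · simp only [g, hi, h]
      exact add_mem (S.lowSpan_xi_le_range_rename i₀ _ (hθ v.2)) (Subalgebra.algebraMap_mem _ _)
    · simp only [g, hi, Sum.inl.injEq, h, if_false]
      exact ⟨X (⟨i, h⟩, v.2), by simp [xVarExcept, ← hi]⟩
  have hzero := eq_zero_of_mem_range_rename_of_subst_eq_zero hN hker hrange
    (by simpa [hsf] using S.subst_eq_zero_of_mem_span hN hα hfJ)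
  rwa [hzero, sub_zero] at hfJ

theorem dimFull_of_rank_eq (hN : S.Nn = 0) (hrk : S.coeffMat.rank = n - 1) : S.DimFull := by
  obtain ⟨α, hα, hα0, hmul⟩ := S.exists_forall_eq_smul_of_rank_eq hrk
  obtain ⟨i₀, hi₀⟩ := Function.ne_iff.mp hα0
  have hker : ∀ β ∈ S.leftKer, β i₀ = 0 → β = 0 := fun β hβ hβ0 => by
    obtain ⟨c, rfl⟩ := hmul β hβ
    have hc : c * α i₀ = 0 := hβ0
    rw [(mul_eq_zero.mp hc).resolve_right hi₀, zero_smul]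
  refine ⟨S.rel α, S.rel_ne_zero hα0, S.isLinearPoly_rel α, S.xOnly_rel α, fun f => ?_⟩
  exact ⟨fun ⟨hfx, hsf⟩ => ⟨hfx, S.mem_span_rel_of_subst_eq_zero hN hα hi₀ hker hfx hsf⟩,
    fun ⟨hfx, hfJ⟩ => ⟨hfx, S.subst_eq_zero_of_mem_span hN hα hfJ⟩⟩

section TopOrder

variable {A : R K n} {d : ℕ} (hA : A ∈ lowSpan (fun i m => (X (Sum.inl i, m) : R K n)) (d + 1))
include hA

lemma iterate_D_of_mem_lowSpan (k : ℕ) :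
    ∃ w ∈ lowSpan (fun i m => (X (Sum.inl i, m) : R K n)) (d + k),
      (⇑S.D)^[k] A = ∑ i, C (cf A (Sum.inl i) d) * X (Sum.inl i, d + k) + w := by
  classical
  have hw₀ := sub_sum_mem_lowSpan Sum.inl_injective hA
  have := S.iterate_D_sum_add (fun i m => S.hD_X (Sum.inl i) m) (fun i => cf A (Sum.inl i) d)
    hw₀ k
  rwa [add_sub_cancel] at this

lemma isHomogeneous_iterate_D (k : ℕ) : ((⇑S.D)^[k] A).IsHomogeneous 1 := by
  obtain ⟨w, hw, hk⟩ := S.iterate_D_of_mem_lowSpan hA k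
  rw [hk]
  exact (isHomogeneous_sum_C_mul_X _ _ _).add (lowSpan_le_homogeneousSubmodule _ hw)

lemma cf_iterate_D_of_le (i : Fin n) {k m : ℕ} (hm : d + k ≤ m) :
    cf ((⇑S.D)^[k] A) (Sum.inl i) m = if m = d + k then cf A (Sum.inl i) d else 0 := by
  classical
  obtain ⟨w, hw, hk⟩ := S.iterate_D_of_mem_lowSpan hA k
  rw [hk, cf_add, cf_eq_zero_of_mem_lowSpan hw _ hm, add_zero,
    cf_sum_C_mul_X Sum.inl_injective]

lemma cf_sum_smul_iterate_D (t : ℕ →₀ K) {b : ℕ} (hb : ∀ k ∈ t.support, k ≤ b) (i : Fin n) :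
    cf (t.sum fun k c => c • (⇑S.D)^[k] A) (Sum.inl i) (d + b) = t b * cf A (Sum.inl i) d := by
  rw [Finsupp.sum, cf_sum]
  simp only [cf_smul]
  rw [Finset.sum_congr rfl fun k hk => by
    rw [S.cf_iterate_D_of_le hA i (by have := hb k hk; omega)]]
  by_cases hbt : b ∈ t.support
  · rw [Finset.sum_eq_single b (fun k _ hkb => by simp [Ne.symm hkb])
      (absurd hbt), if_pos rfl]
  · rw [Finsupp.notMem_support_iff.mp hbt, zero_mul]
    exact Finset.sum_eq_zero fun k hk => by simp [show b ≠ k from fun h => hbt (h ▸ hk)]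

lemma exists_eq_smul_of_mem_span_iterate_D {i₁ : Fin n} (hi₁ : cf A (Sum.inl i₁) d ≠ 0)
    {γ : Fin n → K}
    (hγ : ∑ i, C (γ i) * X (Sum.inl i, 0) ∈ Submodule.span K (Set.range fun k => (⇑S.D)^[k] A)) :
    ∃ c : K, γ = c • fun i => cf A (Sum.inl i) 0 := by
  classical
  obtain ⟨t, ht⟩ := Finsupp.mem_span_range_iff_exists_finsupp.mp hγ
  have hcf : ∀ i m, cf (∑ i, C (γ i) * X (Sum.inl i, 0)) (Sum.inl i) m = if m = 0 then γ i else 0 :=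
    cf_sum_C_mul_X Sum.inl_injective γ 0
  by_cases ht0 : t = 0
  · refine ⟨0, funext fun i => ?_⟩
    have := hcf i 0
    rw [← ht, ht0, Finsupp.sum_zero_index, cf_zero, if_pos rfl] at this
    simp [← this]
  obtain ⟨b, hb, hbmax⟩ : ∃ b ∈ t.support, ∀ k ∈ t.support, k ≤ b :=
    ⟨_, Finset.max'_mem _ (Finsupp.support_nonempty_iff.mpr ht0),
      fun k hk => Finset.le_max' _ k hk⟩
  have htop := fun i => (hcf i (d + b)).symm.trans
    (ht ▸ S.cf_sum_smul_iterate_D hA t hbmax i)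
  -- the coefficient of `x_{i₁,d+b}` is `t b * cf A (Sum.inl i₁) d ≠ 0`, so `d + b` must be `0`
  have hdb : d + b = 0 := by
    by_contra h
    have := htop i₁
    rw [if_neg h] at this
    exact mul_ne_zero (Finsupp.mem_support_iff.mp hb) hi₁ this.symm
  obtain ⟨rfl, rfl⟩ : d = 0 ∧ b = 0 := by omega
  exact ⟨t 0, funext fun i => by simpa using htop i⟩

end TopOrder

/-- Translating `xᵢ` by `Pᵢ(U)` turns every linear element of the implicit ideal into a
homogeneous one (`shear_of_linear`). -/
noncomputable def shear : R K n →ₐ[K] R K n :=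
  aeval fun v => X v + Sum.elim (fun _ => S.subst (X v)) (fun _ => 0) v.1

lemma shear_C (c : K) : S.shear (C c) = C c := by
  rw [shear, aeval_C, algebraMap_eq]

lemma shear_X_inl (i : Fin n) (k : ℕ) :
    S.shear (X (Sum.inl i, k)) = X (Sum.inl i, k) + S.subst (X (Sum.inl i, k)) :=
  aeval_X _ _

lemma shear_X_inr (j : Fin (n - 1)) (k : ℕ) : S.shear (X (Sum.inr j, k)) = X (Sum.inr j, k) := by
  rw [shear, aeval_X, Sum.elim_inr, add_zero]

lemma shear_iterate_D (f : R K n) (k : ℕ) :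
    S.shear ((⇑S.D)^[k] f) = (⇑S.D)^[k] (S.shear f) := by
  refine S.map_iterate_D_of_forall_X (fun ⟨v, m⟩ => ?_) f k
  rcases v with i | j
  · rw [S.hD_X, shear_X_inl, shear_X_inl, map_add, S.hD_X, subst_X_inl, subst_X_inl,
      Function.iterate_succ_apply']
  · rw [S.hD_X, shear_X_inr, shear_X_inr, S.hD_X]

lemma shear_of_linear {f : R K n} (hx : xOnly f) (hf : f.totalDegree ≤ 1) :
    S.shear f = f + S.subst f - C (coeff 0 f) := by
  have hf' := eq_C_add_sum_of_totalDegree_le_one hf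
  have hshear := congrArg S.shear hf'
  have hsubst := congrArg S.subst hf'
  have hX : ∀ v ∈ f.vars, S.shear (X v) = X v + S.subst (X v) := fun v hv => by
    obtain ⟨i, hi⟩ := Sum.isLeft_iff.mp (hx v hv)
    rw [show v = (Sum.inl i, v.2) from Prod.ext hi rfl, shear_X_inl]
  simp only [map_add, map_sum, map_mul, shear_C, subst_C] at hshear hsubst
  rw [Finset.sum_congr rfl fun v hv => by rw [hX v hv, mul_add], Finset.sum_add_distrib]
    at hshear
  linear_combination hshear - hf' - hsubst

lemma shear_xi_zero (i : Fin n) : S.shear (S.xi i 0) = X (Sum.inl i, 0) - S.H i := by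
  rw [xi, map_sub, shear_X_inl, shear_C, subst_X_inl]
  simp only [Function.iterate_zero_apply]
  ring

lemma shear_rel (hN : S.Nn = 0) {γ : Fin n → K} (hγ : γ ∈ S.leftKer) :
    S.shear (S.rel γ) = ∑ i, C (γ i) * X (Sum.inl i, 0) := by
  simp only [rel, map_sum, map_mul, shear_C, shear_xi_zero, mul_sub, Finset.sum_sub_distrib,
    S.sum_C_mul_H_eq_zero hN hγ, sub_zero]

lemma exists_top_order_shear {A : R K n} (hA0 : A ≠ 0) (hAlin : IsLinearPoly A) (hAx : xOnly A)
    (hsA : S.subst A = 0) :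
    ∃ d i, S.shear A ∈ lowSpan (fun i m => (X (Sum.inl i, m) : R K n)) (d + 1) ∧
      cf (S.shear A) (Sum.inl i) d ≠ 0 := by
  have hB : S.shear A = A - C (coeff 0 A) := by rw [S.shear_of_linear hAx hAlin, hsA, add_zero]
  refine exists_top_order ?_ (hB ▸ (totalDegree_sub_C_le _ _).trans hAlin) (by simp [hB]) ?_
  · intro h0
    rw [h0, eq_comm, sub_eq_zero] at hB
    exact hA0 (by rw [← hsA, hB, subst_C])
  · intro w hw
    rw [hB, sub_eq_add_neg, ← map_neg] at hw
    exact hAx w (by simpa using vars_add_subset _ _ hw)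

lemma sum_C_mul_X_mem_span_iterate_D_shear (hN : S.Nn = 0) {A : R K n}
    (hID : ∀ f, S.memID f ↔ S.memDiffSpanX A f) {γ : Fin n → K} (hγ : γ ∈ S.leftKer) :
    ∑ i, C (γ i) * X (Sum.inl i, 0) ∈ Ideal.span (Set.range fun k => (⇑S.D)^[k] (S.shear A)) := by
  have hrel : S.rel γ ∈ Ideal.span {g | ∃ k, g = (⇑S.D)^[k] A} :=
    ((hID _).mp ⟨S.xOnly_rel γ, S.subst_rel hN hγ⟩).2
  have himage : ⇑S.shear '' {g | ∃ k, g = (⇑S.D)^[k] A} =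
      Set.range fun k => (⇑S.D)^[k] (S.shear A) := by
    ext g
    simp [eq_comm, shear_iterate_D]
  rw [← S.shear_rel hN hγ, ← himage, ← Ideal.map_span]
  exact Ideal.mem_map_of_mem S.shear hrel

lemma exists_leftKer_le_span_singleton (hN : S.Nn = 0) (h : S.DimFull) :
    ∃ β : Fin n → K, S.leftKer ≤ K ∙ β := by
  obtain ⟨A, hA0, hAlin, hAx, hID⟩ := h
  have hsA : S.subst A = 0 := ((hID A).mpr ⟨hAx, Ideal.subset_span ⟨0, rfl⟩⟩).2
  obtain ⟨d, i₁, hBd, hi₁⟩ := S.exists_top_order_shear hA0 hAlin hAx hsA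
  refine ⟨fun i => cf (S.shear A) (Sum.inl i) 0, fun γ hγ => ?_⟩
  have hspan := mem_span_of_isHomogeneous_one_of_mem_ideal_span
    (by rintro _ ⟨k, rfl⟩; exact S.isHomogeneous_iterate_D hBd k)
    (isHomogeneous_sum_C_mul_X _ _ _) (S.sum_C_mul_X_mem_span_iterate_D_shear hN hID hγ)
  obtain ⟨c, hc⟩ := S.exists_eq_smul_of_mem_span_iterate_D hBd hi₁ hspan
  exact Submodule.mem_span_singleton.mpr ⟨c, hc.symm⟩

theorem rank_eq_of_dimFull (hN : S.Nn = 0) (h : S.DimFull) : S.coeffMat.rank = n - 1 := by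
  obtain ⟨β, hβ⟩ := S.exists_leftKer_le_span_singleton hN h
  have h1 : Module.finrank K S.leftKer ≤ 1 :=
    (Submodule.finrank_mono hβ).trans ((finrank_span_le_card {β}).trans (by simp))
  have := S.finrank_leftKer
  have := S.rank_coeffMat_le
  have := S.hn
  omega

end Sys

/-- Suppose `N = 0`, i.e. every `Fᵢ` has order `0`. Then the implicit
ideal `ID` of `𝒫(X,U)` has dimension `n - 1` if and only if the leading matrix `S` has
rank `n - 1`. -/
theorem statement_1 {K : Type} [Field K] {n : ℕ} (S : Sys K n) (hN : S.Nn = 0) :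
    S.DimFull ↔ S.Smat.rank = n - 1 := by
  rw [S.rank_Smat hN]
  exact ⟨S.rank_eq_of_dimFull hN, S.dimFull_of_rank_eq hN⟩

end DPPE
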